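/- For every odd diagram D and n, the set Perm_n(D) = {w in S_n : D_o(w) = D}, if nonempty, contains at most one 312-avoiding permutation, and if u in Perm_n(D) avoids 312, then u ≤ w in Bruhat order for all w in Perm_n(D). -/

import Mathlib

def oddDiagram {n : ℕ} (w : Equiv.Perm (Fin n)) : Finset (Fin n × Fin n) :=
  Finset.univ.filter (fun p => (p.2 : ℕ) < (w p.1 : ℕ) ∧ (p.1 : ℕ) < (w.symm p.2 : ℕ) ∧
    (p.1 : ℕ) % 2 ≠ (w.symm p.2 : ℕ) % 2)

def invLength {n : ℕ} (w : Equiv.Perm (Fin n)) : ℕ :=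
  (Finset.univ.filter (fun p : Fin n × Fin n => p.1 < p.2 ∧ w p.2 < w p.1)).card

def bruhatLE {n : ℕ} : Equiv.Perm (Fin n) → Equiv.Perm (Fin n) → Prop :=
  Relation.ReflTransGen (fun u v => ∃ t : Equiv.Perm (Fin n), t.IsSwap ∧ v = u * t ∧ invLength u < invLength v)

def contains213 {n : ℕ} (w : Equiv.Perm (Fin n)) : Prop :=
  ∃ i h j : Fin n, i < h ∧ h < j ∧ w h < w i ∧ w i < w j

def contains312 {n : ℕ} (w : Equiv.Perm (Fin n)) : Prop :=
  ∃ i h j : Fin n, i < h ∧ h < j ∧ w h < w j ∧ w j < w i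

/-!
Let `w ≠ u` have the odd diagram of the 312-avoiding `u`, and let `p` be the first position where
they differ. Avoidance of 312 forces `u p < w p`. For `j = w⁻¹ (u p)`, equality of the diagrams
forces `j ≡ p (mod 2)` and bounds the values of `w` at positions of the other parity after `p`
so well that `w * swap p j` still has the odd diagram of `u`; it is shorter than `w` and below
it in Bruhat order. Induction on the length gives `u ≤ w`. Two 312-avoiding permutations with
the same odd diagram are thus below each other, hence equal, since length strictly increases
along Bruhat steps.
-/

open Equiv

variable {n : ℕ}

def inversions (w : Perm (Fin n)) : Finset (Fin n × Fin n) :=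
  Finset.univ.filter fun p => p.1 < p.2 ∧ w p.2 < w p.1

@[simp]
lemma mem_inversions {w : Perm (Fin n)} {p : Fin n × Fin n} :
    p ∈ inversions w ↔ p.1 < p.2 ∧ w p.2 < w p.1 := by
  simp [inversions]

lemma invLength_eq_card_inversions (w : Perm (Fin n)) : invLength w = (inversions w).card := rfl

lemma eq_left_or_eq_right_of_not_swap_lt_swap {i j x y : Fin n} (hij : i < j) (hxy : x < y)
    (h : ¬ swap i j x < swap i j y) : x = i ∧ y ≤ j ∨ i ≤ x ∧ y = j := by
  rw [swap_apply_def, swap_apply_def] at h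
  split_ifs at h <;> subst_vars <;> grind

/-- The inversions of `w * swap i j` inject into those of `w` other than `(i, j)`, by moving a
pair along `swap i j` whenever that keeps it ordered. -/
lemma invLength_mul_swap_lt {w : Perm (Fin n)} {i j : Fin n} (hij : i < j) (hw : w j < w i) :
    invLength (w * swap i j) < invLength w := by
  set σ := swap i j
  let φ : Fin n × Fin n → Fin n × Fin n := fun p => if σ p.1 < σ p.2 then (σ p.1, σ p.2) else p
  have hmaps : ∀ p ∈ inversions (w * σ), φ p ∈ (inversions w).erase (i, j) := by
    rintro ⟨x, y⟩ hp
    obtain ⟨hxy, hinv⟩ := mem_inversions.1 hp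
    simp only [Perm.mul_apply] at hinv
    simp only [φ, Finset.mem_erase, mem_inversions]
    split_ifs with hσ
    · refine ⟨?_, hσ, by simpa using hinv⟩
      rw [Ne, Prod.mk.injEq]
      rintro ⟨hi, hj⟩
      rw [swap_apply_eq_iff, swap_apply_left] at hi
      rw [swap_apply_eq_iff, swap_apply_right] at hj
      exact absurd (hi ▸ hj ▸ hxy) hij.not_gt
    · rcases eq_left_or_eq_right_of_not_swap_lt_swap hij hxy hσ with ⟨rfl, hy⟩ | ⟨hx, rfl⟩ <;>
        rw [swap_apply_def, swap_apply_def] at hinv <;> split_ifs at hinv <;> grind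
  have hinj : Set.InjOn φ (inversions (w * σ)) := by
    rintro ⟨x, y⟩ hp ⟨x', y'⟩ hp' h
    simp only [Finset.mem_coe, mem_inversions] at hp hp'
    simp only [φ] at h
    split_ifs at h with h1 h2 h2 <;> simp only [Prod.mk.injEq] at h
    · rw [σ.injective h.1, σ.injective h.2]
    · grind
    · grind
    · rw [h.1, h.2]
  rw [invLength_eq_card_inversions, invLength_eq_card_inversions]
  calc (inversions (w * σ)).card ≤ ((inversions w).erase (i, j)).card :=
        Finset.card_le_card_of_injOn φ hmaps hinj
    _ < (inversions w).card := Finset.card_erase_lt_of_mem (by simpa using ⟨hij, hw⟩)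

lemma bruhatLE_mul_swap_of_lt {w : Perm (Fin n)} {i j : Fin n} (hij : i < j) (hw : w j < w i) :
    bruhatLE (w * swap i j) w :=
  Relation.ReflTransGen.single
    ⟨swap i j, ⟨i, j, hij.ne, rfl⟩, by simp [mul_assoc], invLength_mul_swap_lt hij hw⟩

lemma invLength_le_of_bruhatLE {u w : Perm (Fin n)} (h : bruhatLE u w) :
    invLength u ≤ invLength w := by
  induction h with
  | refl => exact le_rfl
  | tail _ hstep ih =>
    obtain ⟨-, -, -, hlt⟩ := hstep
    exact ih.trans hlt.le

lemma bruhatLE_antisymm {u w : Perm (Fin n)} (huw : bruhatLE u w) (hwu : bruhatLE w u) :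
    u = w := by
  rcases huw.cases_tail with rfl | ⟨v, huv, t, -, -, hlt⟩
  · rfl
  · exact absurd ((invLength_le_of_bruhatLE huv).trans_lt hlt)
      (invLength_le_of_bruhatLE hwu).not_gt

lemma bruhatLE_of_exists_mul_swap_mem {S : Set (Perm (Fin n))} {u : Perm (Fin n)}
    (hS : ∀ w ∈ S, w ≠ u → ∃ i j, i < j ∧ w j < w i ∧ w * swap i j ∈ S) :
    ∀ w ∈ S, bruhatLE u w := by
  intro w hw
  induction hlen : invLength w using Nat.strong_induction_on generalizing w with
  | _ m ih =>
    by_cases hwu : w = u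
    · exact hwu ▸ Relation.ReflTransGen.refl
    obtain ⟨i, j, hij, hji, hmem⟩ := hS w hw hwu
    exact (ih _ (hlen ▸ invLength_mul_swap_lt hij hji) _ hmem rfl).trans
      (bruhatLE_mul_swap_of_lt hij hji)

lemma mem_oddDiagram {w : Perm (Fin n)} {a b : Fin n} :
    (a, b) ∈ oddDiagram w ↔ b < w a ∧ a < w.symm b ∧ (a : ℕ) % 2 ≠ (w.symm b : ℕ) % 2 := by
  simp [oddDiagram]

lemma mem_oddDiagram_apply {w : Perm (Fin n)} {a c : Fin n} :
    (a, w c) ∈ oddDiagram w ↔ w c < w a ∧ a < c ∧ (a : ℕ) % 2 ≠ (c : ℕ) % 2 := by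
  simp [mem_oddDiagram]

lemma lt_of_mem_oddDiagram {w : Perm (Fin n)} {a c : Fin n} (h : (a, w c) ∈ oddDiagram w) :
    a < c :=
  (mem_oddDiagram_apply.1 h).2.1

/-- Otherwise `q = u⁻¹ (w p)` lies beyond `p` with the parity of `p`, and `p, p + 1, q` is a
312 pattern of `u`. -/
lemma le_apply_of_oddDiagram_eq {u w : Perm (Fin n)} (hu : ¬ contains312 u)
    (hD : oddDiagram w = oddDiagram u) {p : Fin n} (hagree : ∀ k < p, w k = u k) :
    u p ≤ w p := by
  by_contra! hlt
  obtain ⟨q, hq⟩ := u.surjective (w p)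
  have hpq : p < q := by
    rcases lt_trichotomy q p with h | rfl | h
    · exact absurd (w.injective ((hagree q h).trans hq)) h.ne
    · exact absurd hq hlt.ne'
    · exact h
  have hpar : (p : ℕ) % 2 = (q : ℕ) % 2 := by
    by_contra hpar
    have hmem : (p, u q) ∈ oddDiagram u := mem_oddDiagram_apply.2 ⟨hq ▸ hlt, hpq, hpar⟩
    rw [hq, ← hD] at hmem
    exact (lt_of_mem_oddDiagram hmem).false
  set r : Fin n := ⟨p + 1, by omega⟩
  have hpr : p < r := Fin.lt_def.2 (Nat.lt_succ_self _)
  have hrq : r < q := Fin.lt_def.2 (by grind)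
  have hur : u r < u q := by
    by_contra! hge
    have hmem : (r, u q) ∈ oddDiagram u :=
      mem_oddDiagram_apply.2 ⟨hge.lt_of_ne (u.injective.ne hrq.ne'), hrq, by grind⟩
    rw [hq, ← hD] at hmem
    exact (lt_of_mem_oddDiagram hmem).not_gt hpr
  exact hu ⟨p, r, q, hpr, hrq, hur, hq ▸ hlt⟩

lemma oddDiagram_mul_swap {w : Perm (Fin n)} {i j : Fin n} (hij : i < j) (hw : w j < w i)
    (hpar : (i : ℕ) % 2 = (j : ℕ) % 2)
    (hbetween : ∀ k, i < k → k < j → (k : ℕ) % 2 ≠ (i : ℕ) % 2 → w k < w j)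
    (hbelow : ∀ k, i < k → (k : ℕ) % 2 ≠ (i : ℕ) % 2 → w k < w i → w k < w j) :
    oddDiagram (w * swap i j) = oddDiagram w := by
  set σ := swap i j
  have hσpar : ∀ k, (σ k : ℕ) % 2 = (k : ℕ) % 2 := fun k => by
    rw [swap_apply_def]; split_ifs <;> grind
  ext ⟨a, b⟩
  obtain ⟨c, rfl⟩ := w.surjective b
  have hc : w c = (w * σ) (σ c) := by simp [σ]
  rw [mem_oddDiagram_apply, hc, mem_oddDiagram_apply, ← hc, hσpar]
  simp only [Perm.mul_apply]
  by_cases hac : (a : ℕ) % 2 = (c : ℕ) % 2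
  · simp [hac]
  simp only [Ne, hac, not_false_eq_true, and_true, σ, swap_apply_def]
  -- `a` and `c` have opposite parities, so at most one of them lies in `{i, j}`; the cases
  -- `a = i`, `a = j`, `c = i`, `c = j` follow from `hbetween` and `hbelow`.
  split_ifs <;> grind

lemma exists_mul_swap_oddDiagram_eq {u w : Perm (Fin n)} (hu : ¬ contains312 u)
    (hD : oddDiagram w = oddDiagram u) (hwu : w ≠ u) :
    ∃ i j, i < j ∧ w j < w i ∧ oddDiagram (w * swap i j) = oddDiagram u := by
  obtain ⟨p, hp, hagree⟩ : ∃ p, w p ≠ u p ∧ ∀ k < p, w k = u k := by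
    obtain ⟨k, hk⟩ := not_forall.1 (mt Perm.ext hwu)
    obtain ⟨p, hp, hmin⟩ := wellFounded_lt.has_min {k | w k ≠ u k} ⟨k, hk⟩
    exact ⟨p, hp, fun k hk => not_not.1 fun h => hmin k h hk⟩
  have hup : u p < w p := (le_apply_of_oddDiagram_eq hu hD hagree).lt_of_ne (Ne.symm hp)
  obtain ⟨j, hj⟩ := w.surjective (u p)
  have hpj : p < j := by
    rcases lt_trichotomy j p with h | rfl | h
    · exact absurd (u.injective ((hagree j h).symm.trans hj)) h.ne
    · exact absurd hj hp
    · exact h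
  have hpar : (p : ℕ) % 2 = (j : ℕ) % 2 := by
    by_contra hpar
    have hmem : (p, w j) ∈ oddDiagram w := mem_oddDiagram_apply.2 ⟨hj ▸ hup, hpj, hpar⟩
    rw [hj, hD] at hmem
    exact (lt_of_mem_oddDiagram hmem).false
  have hbetween : ∀ k, p < k → k < j → (k : ℕ) % 2 ≠ (p : ℕ) % 2 → w k < w j := by
    intro k hpk hkj hk
    by_contra! hge
    have hmem : (k, w j) ∈ oddDiagram w :=
      mem_oddDiagram_apply.2 ⟨hge.lt_of_ne (w.injective.ne hkj.ne'), hkj, by omega⟩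
    rw [hj, hD] at hmem
    exact (lt_of_mem_oddDiagram hmem).not_gt hpk
  have hbelow : ∀ k, p < k → (k : ℕ) % 2 ≠ (p : ℕ) % 2 → w k < w p → w k < w j := by
    intro k hpk hk hkp
    have hmem : (p, w k) ∈ oddDiagram w := mem_oddDiagram_apply.2 ⟨hkp, hpk, hk.symm⟩
    rw [hD] at hmem
    exact hj ▸ (mem_oddDiagram.1 hmem).1
  exact ⟨p, j, hpj, hj ▸ hup, (oddDiagram_mul_swap hpj (hj ▸ hup) hpar hbetween hbelow).trans hD⟩

lemma bruhatLE_of_oddDiagram_eq {u w : Perm (Fin n)} (hu : ¬ contains312 u)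
    (hD : oddDiagram w = oddDiagram u) : bruhatLE u w :=
  bruhatLE_of_exists_mul_swap_mem (S := {w | oddDiagram w = oddDiagram u})
    (fun _ hw hwu => exists_mul_swap_oddDiagram_eq hu hw hwu) w hD

theorem stmt9 {n : ℕ} (u : Equiv.Perm (Fin n)) (hu : ¬ contains312 u) :
    (∀ w : Equiv.Perm (Fin n), oddDiagram w = oddDiagram u → bruhatLE u w) ∧
      (∀ u' : Equiv.Perm (Fin n), ¬ contains312 u' → oddDiagram u' = oddDiagram u → u' = u) :=
  ⟨fun _ hD => bruhatLE_of_oddDiagram_eq hu hD, fun _ hu' hD =>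
    bruhatLE_antisymm (bruhatLE_of_oddDiagram_eq hu' hD.symm) (bruhatLE_of_oddDiagram_eq hu hD)⟩
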